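/- arXiv:2306.08750 — 4 statements merged into one kernel-verified Lean document; each statement's English description precedes it below -/
import Mathlib

section
/- Hessian quadratic-form bound for the smoothed loss: let ε > 0, so that L_ε is twice continuously differentiable as a real function of (Re z, Im z, Re v, Im v). Then for all z, v, u, h ∈ ℂ^d, the second real Fréchet derivative of L_ε at (z, v) evaluated at the pair ((u,h),(u,h)) satisfies the two-sided bound: it is at most 2·Σ_{r∈R}Σ_{k=1}^d |u^T Q_{r,k} v + z^T Q_{r,k} h|² + 4·(L_ε(z,v))^{1/2}·(Σ_{r∈R}Σ_{k=1}^d |u^T Q_{r,k} h|²)^{1/2}, and at least −4·(L_ε(z,v))^{1/2}·(Σ_{r∈R}Σ_{k=1}^d |u^T Q_{r,k} h|²)^{1/2} − 2·(max_{r,k}(y_{r,k}+ε)^{1/2}·ε^{−1/2} − 1)·Σ_{r∈R}Σ_{k=1}^d |u^T Q_{r,k} v + z^T Q_{r,k} h|². -/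
/-!
Along the line `t ↦ (z, v) + t • (u, h)` every measurement is a quadratic curve,
`z^T Q v ↦ a + t b + t² c` with `b = u^T Q v + z^T Q h` and `c = u^T Q h`, so the Hessian
quadratic form is a sum of second derivatives at `0` of `ψ (‖a + t b + t² c‖²)`, where
`ψ s = (√(s + ε) - m)²` and `m = √(y_{r,k} + ε)`. The chain rule gives
`ψ''(‖a‖²) (2⟪a, b⟫)² + ψ'(‖a‖²) (2‖b‖² + 4⟪a, c⟫)` with
`ψ'(s) = 1 - m / √(s + ε) ∈ [1 - m / √ε, 1]` and `ψ'' ≥ 0`. By Cauchy–Schwarz the curvature term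
is at most `(m / S) · 2‖b‖²` (`S = √(‖a‖² + ε)`), which exactly compensates the negative part of
`ψ' · 2‖b‖²`, and the cross term is at most `4 |S - m| ‖c‖` in absolute value; Cauchy–Schwarz
over the pairs `(r, k)` turns the sum of the latter into `4 √L_ε · √(Σ ‖c‖²)`.
-/

open scoped BigOperators Classical
open Finset

noncomputable section

namespace Ptycho

/-- Entry of the discrete Fourier matrix: `F_{k,j} = exp(-2πi·k·j/d)`. -/
def Fent (d : ℕ) (k j : ZMod d) : ℂ :=
  Complex.exp (-(2 * (Real.pi : ℂ) * Complex.I * (k.val : ℂ) * (j.val : ℂ)) / (d : ℂ))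

/-- `[F (z ∘ S_r v)]_k`, i.e. the bilinear form `z^T Q_{r,k} v`. -/
def Qform (d : ℕ) [NeZero d] (r k : ZMod d) (z v : ZMod d → ℂ) : ℂ :=
  ∑ j : ZMod d, z j * Fent d k j * v (j - r)

/-- Noiseless ptychographic measurement `|[F (x ∘ S_r w)]_k|²`. -/
def meas (d : ℕ) [NeZero d] (r k : ZMod d) (x w : ZMod d → ℂ) : ℝ :=
  ‖Qform d r k x w‖ ^ 2

/-- Squared Euclidean norm `‖u‖₂²`. -/
def nsq (d : ℕ) [NeZero d] (u : ZMod d → ℂ) : ℝ :=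
  ∑ j : ZMod d, ‖u j‖ ^ 2

/-- Single-shift amplitude-based loss
`L_{r,ε}(z,v) = Σ_k (√(|z^T Q_{r,k} v|² + ε) − √(y_{r,k} + ε))²`. -/
def lossR (d : ℕ) [NeZero d] (y : ZMod d → ZMod d → ℝ) (ε : ℝ) (r : ZMod d)
    (z v : ZMod d → ℂ) : ℝ :=
  ∑ k : ZMod d,
    (Real.sqrt (‖Qform d r k z v‖ ^ 2 + ε) - Real.sqrt (y r k + ε)) ^ 2

/-- Amplitude-based loss `L_ε(z,v) = Σ_{r∈R} L_{r,ε}(z,v)`. -/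
def loss (d : ℕ) [NeZero d] (R : Finset (ZMod d)) (y : ZMod d → ZMod d → ℝ) (ε : ℝ)
    (z v : ZMod d → ℂ) : ℝ :=
  ∑ r ∈ R, lossR d y ε r z v

/-- Coefficient `1 − √(y_{r,k}+ε)/√(|z^T Q_{r,k} v|²+ε)` appearing in the Wirtinger
gradients. (Lean's convention `a/0 = 0` realizes the paper's convention, since the
coefficient is always multiplied by `z^T Q_{r,k} v`.) -/
def coef (ε yrk : ℝ) (c : ℂ) : ℝ :=
  1 - Real.sqrt (yrk + ε) / Real.sqrt (‖c‖ ^ 2 + ε)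

/-- Wirtinger gradient `∇_z L_{r,ε}(z,v)`; note `(Q_{r,k} v)_j = F_{k,j}·v_{j−r}`. -/
def gradZr (d : ℕ) [NeZero d] (y : ZMod d → ZMod d → ℝ) (ε : ℝ) (r : ZMod d)
    (z v : ZMod d → ℂ) : ZMod d → ℂ := fun j =>
  ∑ k : ZMod d, (coef ε (y r k) (Qform d r k z v) : ℂ) * Qform d r k z v *
    (starRingEnd ℂ) (Fent d k j * v (j - r))

/-- Wirtinger gradient `∇_v L_{r,ε}(z,v)`; note `(Q_{r,k}^T z)_j = F_{k,j+r}·z_{j+r}`. -/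
def gradVr (d : ℕ) [NeZero d] (y : ZMod d → ZMod d → ℝ) (ε : ℝ) (r : ZMod d)
    (z v : ZMod d → ℂ) : ZMod d → ℂ := fun j =>
  ∑ k : ZMod d, (coef ε (y r k) (Qform d r k z v) : ℂ) * Qform d r k z v *
    (starRingEnd ℂ) (Fent d k (j + r) * z (j + r))

/-- Regularized loss `J(z,v) = L_ε(z,v) + α_T‖z‖₂² + β_T‖v‖₂²`. -/
def Jfun (d : ℕ) [NeZero d] (R : Finset (ZMod d)) (y : ZMod d → ZMod d → ℝ)
    (ε αT βT : ℝ) (z v : ZMod d → ℂ) : ℝ :=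
  loss d R y ε z v + αT * nsq d z + βT * nsq d v

/-- Wirtinger gradient `∇_z J(z,v) = ∇_z L_ε(z,v) + α_T z`. -/
def gradZJ (d : ℕ) [NeZero d] (R : Finset (ZMod d)) (y : ZMod d → ZMod d → ℝ)
    (ε αT : ℝ) (z v : ZMod d → ℂ) : ZMod d → ℂ := fun j =>
  (∑ r ∈ R, gradZr d y ε r z v j) + (αT : ℂ) * z j

/-- Wirtinger gradient `∇_v J(z,v) = ∇_v L_ε(z,v) + β_T v`. -/
def gradVJ (d : ℕ) [NeZero d] (R : Finset (ZMod d)) (y : ZMod d → ZMod d → ℝ)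
    (ε βT : ℝ) (z v : ZMod d → ℂ) : ZMod d → ℂ := fun j =>
  (∑ r ∈ R, gradVr d y ε r z v j) + (βT : ℂ) * v j

/-- `‖y/d‖₁ = (1/d)·Σ_{r∈R} Σ_k y_{r,k}`. -/
def yd1 (d : ℕ) [NeZero d] (R : Finset (ZMod d)) (y : ZMod d → ZMod d → ℝ) : ℝ :=
  (∑ r ∈ R, ∑ k : ZMod d, y r k) / d

/-- Real part of the Hermitian inner product `Re(u* g)`. -/
def reInner (d : ℕ) [NeZero d] (u g : ZMod d → ℂ) : ℝ :=
  (∑ j : ZMod d, (starRingEnd ℂ) (u j) * g j).re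

/-- `B(z,v) = 3d·((10/3)‖z‖₂² + (10/3)‖v‖₂² + ‖y/d‖₁^{1/2}) + 3·max{α_T, β_T}`. -/
def Bfun (d : ℕ) [NeZero d] (R : Finset (ZMod d)) (y : ZMod d → ZMod d → ℝ)
    (αT βT : ℝ) (z v : ZMod d → ℂ) : ℝ :=
  3 * d * ((10 / 3) * nsq d z + (10 / 3) * nsq d v + Real.sqrt (yd1 d R y)) +
    3 * max αT βT

open scoped RealInnerProductSpace

section SecondDerivatives

theorem iteratedFDeriv_two_apply_self_eq_deriv_deriv {E : Type*} [NormedAddCommGroup E]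
    [NormedSpace ℝ E] {f : E → ℝ} (hf : ContDiff ℝ 2 f) (x w : E) :
    iteratedFDeriv ℝ 2 f x ![w, w] = deriv (deriv fun t : ℝ => f (x + t • w)) 0 := by
  have hline : ∀ t : ℝ, HasDerivAt (fun t : ℝ => x + t • w) w t := fun t => by
    simpa using ((hasDerivAt_id t).smul_const w).const_add x
  have hderiv : deriv (fun t : ℝ => f (x + t • w)) = fun t => fderiv ℝ f (x + t • w) w :=
    funext fun t =>
      ((hf.differentiable two_ne_zero).differentiableAt.hasFDerivAt.comp_hasDerivAt t
        (hline t)).deriv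
  have hf' : Differentiable ℝ (fderiv ℝ f) := (hf.fderiv_right le_rfl).differentiable one_ne_zero
  have hsecond : HasDerivAt (fun t : ℝ => fderiv ℝ f (x + t • w) w)
      (fderiv ℝ (fderiv ℝ f) x w w) 0 := by
    have := (hf' (x + (0 : ℝ) • w)).hasFDerivAt.comp_hasDerivAt 0 (hline 0)
    rw [zero_smul, add_zero] at this
    exact (ContinuousLinearMap.apply ℝ ℝ w).hasFDerivAt.comp_hasDerivAt 0 this
  rw [hderiv, hsecond.deriv, iteratedFDeriv_two_apply]
  rfl

theorem deriv_deriv_comp_eq {ψ ψ' N N' : ℝ → ℝ} {t₀ p₂ n₂ : ℝ}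
    (hψ : ∀ t, HasDerivAt ψ (ψ' (N t)) (N t)) (hN : ∀ t, HasDerivAt N (N' t) t)
    (hψ' : HasDerivAt ψ' p₂ (N t₀)) (hN' : HasDerivAt N' n₂ t₀) :
    deriv (deriv (ψ ∘ N)) t₀ = p₂ * N' t₀ ^ 2 + ψ' (N t₀) * n₂ := by
  have : deriv (ψ ∘ N) = fun t => ψ' (N t) * N' t :=
    funext fun t => ((hψ t).comp t (hN t)).deriv
  rw [this]
  exact ((hψ'.comp t₀ (hN t₀)).mul hN').deriv.trans (by simp only [Function.comp_apply]; ring)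

end SecondDerivatives

section AmplitudeProfile

variable {E : Type*} [NormedAddCommGroup E] [InnerProductSpace ℝ E] {ε m s : ℝ}

def ampProfile (ε m s : ℝ) : ℝ := (√(s + ε) - m) ^ 2

theorem hasDerivAt_ampProfile (hs : 0 < s + ε) :
    HasDerivAt (ampProfile ε m) (1 - m / √(s + ε)) s := by
  have := ((((hasDerivAt_id s).add_const ε).sqrt hs.ne').sub_const m).pow 2
  refine this.congr_deriv ?_
  simp only [id, one_div]
  field_simp
  ring

theorem hasDerivAt_one_sub_div_sqrt (hs : 0 < s + ε) :
    HasDerivAt (fun s => 1 - m / √(s + ε)) (m / (2 * (s + ε) * √(s + ε))) s := by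
  have hS : 0 < √(s + ε) := Real.sqrt_pos.mpr hs
  have := ((hasDerivAt_const s m).div (((hasDerivAt_id s).add_const ε).sqrt hs.ne')
    hS.ne').const_sub 1
  refine this.congr_deriv ?_
  simp only [id, Real.sq_sqrt hs.le]
  field_simp
  ring

theorem contDiff_ampProfile_norm_sq (hε : 0 < ε) {n : WithTop ℕ∞} :
    ContDiff ℝ n fun x : E => ampProfile ε m (‖x‖ ^ 2) :=
  ((((contDiff_norm_sq ℝ).add contDiff_const).sqrt fun x => by positivity).sub
    contDiff_const).pow 2

def ampHess (ε m : ℝ) (a b c : E) : ℝ :=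
  m / (2 * (‖a‖ ^ 2 + ε) * √(‖a‖ ^ 2 + ε)) * (2 * ⟪a, b⟫) ^ 2
    + (1 - m / √(‖a‖ ^ 2 + ε)) * (2 * ‖b‖ ^ 2 + 4 * ⟪a, c⟫)

theorem deriv_deriv_ampProfile_norm_sq (hε : 0 < ε) (a b c : E) :
    deriv (deriv fun t : ℝ => ampProfile ε m (‖a + t • b + t ^ 2 • c‖ ^ 2)) 0
      = ampHess ε m a b c := by
  have hγ : ∀ t : ℝ, HasDerivAt (fun t : ℝ => a + t • b + t ^ 2 • c) (b + (2 * t) • c) t :=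
    fun t => by
      have := (((hasDerivAt_id t).smul_const b).add ((hasDerivAt_pow 2 t).smul_const c)).const_add a
      simpa [add_assoc] using this
  have hγ' : HasDerivAt (fun t : ℝ => b + (2 * t) • c) ((2 : ℝ) • c) 0 := by
    simpa using (((hasDerivAt_id (0 : ℝ)).const_mul 2).smul_const c).const_add b
  have hpos : ∀ t : ℝ, 0 < ‖a + t • b + t ^ 2 • c‖ ^ 2 + ε := fun t => by positivity
  have := deriv_deriv_comp_eq (ψ := ampProfile ε m)
    (fun t => hasDerivAt_ampProfile (hpos t)) (fun t => (hγ t).norm_sq)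
    (hasDerivAt_one_sub_div_sqrt (hpos 0)) (((hγ 0).inner ℝ hγ').const_mul 2)
  simp only [Function.comp_def] at this
  rw [this, ampHess]
  simp only [zero_smul, add_zero, zero_pow two_ne_zero, mul_zero, inner_smul_right,
    real_inner_self_eq_norm_sq]
  ring

theorem abs_inner_le_sqrt_mul_norm (hε : 0 ≤ ε) (a b : E) :
    |⟪a, b⟫| ≤ √(‖a‖ ^ 2 + ε) * ‖b‖ :=
  (abs_real_inner_le_norm a b).trans
    (mul_le_mul_of_nonneg_right (Real.le_sqrt_of_sq_le (by linarith)) (norm_nonneg b))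

theorem abs_one_sub_div_sqrt_mul_inner_le (hε : 0 < ε) (a c : E) :
    |(1 - m / √(‖a‖ ^ 2 + ε)) * (4 * ⟪a, c⟫)| ≤ 4 * |√(‖a‖ ^ 2 + ε) - m| * ‖c‖ := by
  have hac := abs_inner_le_sqrt_mul_norm hε.le a c
  set S := √(‖a‖ ^ 2 + ε)
  have hS : 0 < S := by positivity
  have hfactor : 1 - m / S = (S - m) / S := by field_simp
  rw [hfactor]
  simp only [abs_mul, abs_div, abs_of_pos hS, abs_of_pos (four_pos : (0 : ℝ) < 4)]
  calc |S - m| / S * (4 * |⟪a, c⟫|) ≤ |S - m| / S * (4 * (S * ‖c‖)) := by gcongr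
    _ = 4 * |S - m| * ‖c‖ := by field_simp

theorem ampHess_le (hε : 0 < ε) (hm : 0 ≤ m) (a b c : E) :
    ampHess ε m a b c ≤ 2 * ‖b‖ ^ 2 + 4 * |√(‖a‖ ^ 2 + ε) - m| * ‖c‖ := by
  have hcross := (abs_le.mp (abs_one_sub_div_sqrt_mul_inner_le (m := m) hε a c)).2
  have hab := abs_inner_le_sqrt_mul_norm hε.le a b
  set S := √(‖a‖ ^ 2 + ε)
  have hS : 0 < S := by positivity
  have hS2 : S ^ 2 = ‖a‖ ^ 2 + ε := Real.sq_sqrt (by positivity)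
  have hcurv : m / (2 * (‖a‖ ^ 2 + ε) * S) * (2 * ⟪a, b⟫) ^ 2 ≤ m / S * (2 * ‖b‖ ^ 2) := by
    have hinner : ⟪a, b⟫ ^ 2 ≤ S ^ 2 * ‖b‖ ^ 2 := by
      rw [← mul_pow]
      exact sq_le_sq.mpr (hab.trans (le_abs_self _))
    rw [← hS2]
    calc m / (2 * S ^ 2 * S) * (2 * ⟪a, b⟫) ^ 2 = 2 * (m / S) * (⟪a, b⟫ ^ 2 / S ^ 2) := by
          field_simp
      _ ≤ 2 * (m / S) * ‖b‖ ^ 2 := by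
          gcongr
          rwa [div_le_iff₀ (by positivity), mul_comm]
      _ = m / S * (2 * ‖b‖ ^ 2) := by ring
  rw [ampHess]
  linarith

theorem le_ampHess (hε : 0 < ε) (hm : 0 ≤ m) {M : ℝ} (hmM : m ≤ M) (a b c : E) :
    -(4 * |√(‖a‖ ^ 2 + ε) - m| * ‖c‖) - 2 * (M / √ε - 1) * ‖b‖ ^ 2 ≤ ampHess ε m a b c := by
  have hcross := (abs_le.mp (abs_one_sub_div_sqrt_mul_inner_le (m := m) hε a c)).1
  have hSε : √ε ≤ √(‖a‖ ^ 2 + ε) := Real.sqrt_le_sqrt (le_add_of_nonneg_left (sq_nonneg _))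
  set S := √(‖a‖ ^ 2 + ε)
  have hcurv : 0 ≤ m / (2 * (‖a‖ ^ 2 + ε) * S) * (2 * ⟪a, b⟫) ^ 2 := by positivity
  have hcoef : 1 - M / √ε ≤ 1 - m / S := sub_le_sub_left
    ((div_le_div_of_nonneg_left hm (by positivity) hSε).trans
      (div_le_div_of_nonneg_right hmM (Real.sqrt_nonneg ε))) 1
  have := mul_le_mul_of_nonneg_right hcoef (by positivity : (0 : ℝ) ≤ 2 * ‖b‖ ^ 2)
  rw [ampHess]
  linarith

end AmplitudeProfile

section DoubleSums

variable {ι κ E : Type*} [NormedAddCommGroup E] (s : Finset ι) (t : Finset κ) {ε : ℝ}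

theorem sum_sum_mul_le_sqrt_mul_sqrt (f g : ι → κ → ℝ) :
    ∑ i ∈ s, ∑ j ∈ t, f i j * g i j ≤
      √(∑ i ∈ s, ∑ j ∈ t, f i j ^ 2) * √(∑ i ∈ s, ∑ j ∈ t, g i j ^ 2) := by
  have := Real.sum_mul_le_sqrt_mul_sqrt (s ×ˢ t) (fun p => f p.1 p.2) (fun p => g p.1 p.2)
  rwa [sum_product' (f := fun i j => f i j * g i j), sum_product' (f := fun i j => f i j ^ 2),
    sum_product' (f := fun i j => g i j ^ 2)] at this

theorem sum_sum_abs_mul_norm_le (a c : ι → κ → E) (m : ι → κ → ℝ) :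
    ∑ i ∈ s, ∑ j ∈ t, |√(‖a i j‖ ^ 2 + ε) - m i j| * ‖c i j‖ ≤
      √(∑ i ∈ s, ∑ j ∈ t, (√(‖a i j‖ ^ 2 + ε) - m i j) ^ 2) *
        √(∑ i ∈ s, ∑ j ∈ t, ‖c i j‖ ^ 2) := by
  simpa only [sq_abs] using sum_sum_mul_le_sqrt_mul_sqrt s t
    (fun i j => |√(‖a i j‖ ^ 2 + ε) - m i j|) (fun i j => ‖c i j‖)

variable [InnerProductSpace ℝ E] (hε : 0 < ε) (a b c : ι → κ → E) (m : ι → κ → ℝ)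
  (hm : ∀ i ∈ s, ∀ j ∈ t, 0 ≤ m i j)
include hε hm

theorem sum_sum_ampHess_le :
    ∑ i ∈ s, ∑ j ∈ t, ampHess ε (m i j) (a i j) (b i j) (c i j) ≤
      2 * (∑ i ∈ s, ∑ j ∈ t, ‖b i j‖ ^ 2) +
        4 * √(∑ i ∈ s, ∑ j ∈ t, ampProfile ε (m i j) (‖a i j‖ ^ 2)) *
          √(∑ i ∈ s, ∑ j ∈ t, ‖c i j‖ ^ 2) := by
  calc ∑ i ∈ s, ∑ j ∈ t, ampHess ε (m i j) (a i j) (b i j) (c i j)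
      ≤ ∑ i ∈ s, ∑ j ∈ t, (2 * ‖b i j‖ ^ 2 + 4 * (|√(‖a i j‖ ^ 2 + ε) - m i j| * ‖c i j‖)) :=
        sum_le_sum fun i hi => sum_le_sum fun j hj =>
          (ampHess_le hε (hm i hi j hj) _ _ _).trans_eq (by ring)
    _ = 2 * (∑ i ∈ s, ∑ j ∈ t, ‖b i j‖ ^ 2) +
          4 * ∑ i ∈ s, ∑ j ∈ t, |√(‖a i j‖ ^ 2 + ε) - m i j| * ‖c i j‖ := by
        simp only [sum_add_distrib, mul_sum]
    _ ≤ _ := by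
        rw [mul_assoc 4]
        gcongr
        exact sum_sum_abs_mul_norm_le s t a c m

theorem le_sum_sum_ampHess {M : ℝ} (hmM : ∀ i ∈ s, ∀ j ∈ t, m i j ≤ M) :
    -(4 * √(∑ i ∈ s, ∑ j ∈ t, ampProfile ε (m i j) (‖a i j‖ ^ 2)) *
          √(∑ i ∈ s, ∑ j ∈ t, ‖c i j‖ ^ 2)) -
        2 * (M / √ε - 1) * (∑ i ∈ s, ∑ j ∈ t, ‖b i j‖ ^ 2) ≤
      ∑ i ∈ s, ∑ j ∈ t, ampHess ε (m i j) (a i j) (b i j) (c i j) := by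
  calc _ ≤ -(4 * ∑ i ∈ s, ∑ j ∈ t, |√(‖a i j‖ ^ 2 + ε) - m i j| * ‖c i j‖) -
          2 * (M / √ε - 1) * (∑ i ∈ s, ∑ j ∈ t, ‖b i j‖ ^ 2) := by
        rw [mul_assoc 4]
        gcongr
        exact sum_sum_abs_mul_norm_le s t a c m
    _ = ∑ i ∈ s, ∑ j ∈ t, (-(4 * |√(‖a i j‖ ^ 2 + ε) - m i j| * ‖c i j‖) -
          2 * (M / √ε - 1) * ‖b i j‖ ^ 2) := by
        simp only [sum_sub_distrib, sum_neg_distrib, mul_sum, mul_assoc]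
    _ ≤ _ :=
        sum_le_sum fun i hi => sum_le_sum fun j hj =>
          le_ampHess hε (hm i hi j hj) (hmM i hi j hj) _ _ _

end DoubleSums

section Loss

variable (d : ℕ) [NeZero d]

theorem contDiff_Qform (r k : ZMod d) {n : WithTop ℕ∞} :
    ContDiff ℝ n fun p : (ZMod d → ℂ) × (ZMod d → ℂ) => Qform d r k p.1 p.2 := by
  unfold Qform
  fun_prop

theorem Qform_add_smul (r k : ZMod d) (z v u h : ZMod d → ℂ) (t : ℝ) :
    Qform d r k (z + t • u) (v + t • h) =
      Qform d r k z v + t • (Qform d r k u v + Qform d r k z h) + t ^ 2 • Qform d r k u h := by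
  simp only [Qform, Complex.real_smul, mul_sum, ← sum_add_distrib, Pi.add_apply, Pi.smul_apply]
  refine sum_congr rfl fun j _ => ?_
  push_cast
  ring

variable (R : Finset (ZMod d)) (y : ZMod d → ZMod d → ℝ) {ε : ℝ}

theorem loss_eq_sum_ampProfile (z v : ZMod d → ℂ) :
    loss d R y ε z v = ∑ r ∈ R, ∑ k, ampProfile ε (√(y r k + ε)) (‖Qform d r k z v‖ ^ 2) :=
  rfl

variable (hε : 0 < ε)
include hε

theorem contDiff_loss :
    ContDiff ℝ 2 fun zv : (ZMod d → ℂ) × (ZMod d → ℂ) => loss d R y ε zv.1 zv.2 := by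
  simp only [loss_eq_sum_ampProfile]
  exact ContDiff.sum fun r _ => ContDiff.sum fun k _ =>
    (contDiff_ampProfile_norm_sq hε).comp (contDiff_Qform d r k)

theorem iteratedFDeriv_loss_apply_self (z v u h : ZMod d → ℂ) :
    iteratedFDeriv ℝ 2 (fun zv : (ZMod d → ℂ) × (ZMod d → ℂ) => loss d R y ε zv.1 zv.2) (z, v)
        ![(u, h), (u, h)] =
      ∑ r ∈ R, ∑ k, ampHess ε (√(y r k + ε)) (Qform d r k z v)
        (Qform d r k u v + Qform d r k z h) (Qform d r k u h) := by
  have hterm : ∀ r k, ContDiff ℝ 2 fun zv : (ZMod d → ℂ) × (ZMod d → ℂ) =>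
      ampProfile ε (√(y r k + ε)) (‖Qform d r k zv.1 zv.2‖ ^ 2) := fun r k =>
    (contDiff_ampProfile_norm_sq hε).comp (contDiff_Qform d r k)
  simp only [loss_eq_sum_ampProfile]
  rw [iteratedFDeriv_fun_sum_apply fun r _ => (ContDiff.sum fun k _ => hterm r k).contDiffAt,
    _root_.sum_apply]
  refine sum_congr rfl fun r _ => ?_
  rw [iteratedFDeriv_fun_sum_apply fun k _ => (hterm r k).contDiffAt,
    _root_.sum_apply]
  refine sum_congr rfl fun k _ => ?_
  rw [iteratedFDeriv_two_apply_self_eq_deriv_deriv (hterm r k)]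
  simp only [Prod.fst_add, Prod.snd_add, Prod.smul_fst, Prod.smul_snd, Qform_add_smul]
  exact deriv_deriv_ampProfile_norm_sq hε _ _ _

end Loss

theorem hessian_quadratic_form_bound_general (d : ℕ) [NeZero d]
    (R : Finset (ZMod d)) (hR : R.Nonempty)
    (y : ZMod d → ZMod d → ℝ)
    (ε : ℝ) (hε : 0 < ε) :
    ContDiff ℝ 2 (fun zv : (ZMod d → ℂ) × (ZMod d → ℂ) => loss d R y ε zv.1 zv.2) ∧
    ∀ z v u h : ZMod d → ℂ,
      (iteratedFDeriv ℝ 2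
          (fun zv : (ZMod d → ℂ) × (ZMod d → ℂ) => loss d R y ε zv.1 zv.2)
          (z, v) ![(u, h), (u, h)]
        ≤ 2 * (∑ r ∈ R, ∑ k : ZMod d,
              ‖Qform d r k u v + Qform d r k z h‖ ^ 2)
          + 4 * Real.sqrt (loss d R y ε z v) *
              Real.sqrt (∑ r ∈ R, ∑ k : ZMod d, ‖Qform d r k u h‖ ^ 2)) ∧
      (-(4 * Real.sqrt (loss d R y ε z v) *
              Real.sqrt (∑ r ∈ R, ∑ k : ZMod d, ‖Qform d r k u h‖ ^ 2))
          - 2 * (Real.sqrt ((R.sup' hR fun r =>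
                  Finset.univ.sup' ⟨0, Finset.mem_univ 0⟩ fun k => y r k + ε))
                / Real.sqrt ε - 1) *
              (∑ r ∈ R, ∑ k : ZMod d,
                ‖Qform d r k u v + Qform d r k z h‖ ^ 2)
        ≤ iteratedFDeriv ℝ 2
            (fun zv : (ZMod d → ℂ) × (ZMod d → ℂ) => loss d R y ε zv.1 zv.2)
            (z, v) ![(u, h), (u, h)]) := by
  refine ⟨contDiff_loss d R y hε, fun z v u h => ?_⟩
  have hm : ∀ r ∈ R, ∀ k ∈ univ, 0 ≤ √(y r k + ε) := fun _ _ _ _ => Real.sqrt_nonneg _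
  rw [iteratedFDeriv_loss_apply_self d R y hε, loss_eq_sum_ampProfile]
  refine ⟨sum_sum_ampHess_le R univ hε _ _ _ _ hm,
    le_sum_sum_ampHess R univ hε _ _ _ _ hm fun r hr k _ => ?_⟩
  exact Real.sqrt_le_sqrt ((le_sup' (fun k => y r k + ε) (mem_univ k)).trans
    (le_sup' (fun r => univ.sup' _ fun k => y r k + ε) hr))

/-- **Hessian quadratic-form bound for the smoothed loss** (`ε > 0`): `L_ε` is twice
continuously differentiable as a real function on `ℂ^d × ℂ^d ≅ ℝ^{4d}`, and its second
real Fréchet derivative at `(z,v)` evaluated at `((u,h),(u,h))` is bounded above by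
`2·Σ|u^T Q v + z^T Q h|² + 4·√(L_ε(z,v))·√(Σ|u^T Q h|²)` and below by
`−4·√(L_ε(z,v))·√(Σ|u^T Q h|²) − 2·(max_{r,k}√(y+ε)/√ε − 1)·Σ|u^T Q v + z^T Q h|²`. -/
theorem hessian_quadratic_form_bound (d : ℕ) [NeZero d]
    (R : Finset (ZMod d)) (hR : R.Nonempty)
    (y : ZMod d → ZMod d → ℝ) (hy : ∀ r ∈ R, ∀ k : ZMod d, 0 ≤ y r k)
    (ε : ℝ) (hε : 0 < ε) :
    ContDiff ℝ 2 (fun zv : (ZMod d → ℂ) × (ZMod d → ℂ) => loss d R y ε zv.1 zv.2) ∧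
    ∀ z v u h : ZMod d → ℂ,
      (iteratedFDeriv ℝ 2
          (fun zv : (ZMod d → ℂ) × (ZMod d → ℂ) => loss d R y ε zv.1 zv.2)
          (z, v) ![(u, h), (u, h)]
        ≤ 2 * (∑ r ∈ R, ∑ k : ZMod d,
              ‖Qform d r k u v + Qform d r k z h‖ ^ 2)
          + 4 * Real.sqrt (loss d R y ε z v) *
              Real.sqrt (∑ r ∈ R, ∑ k : ZMod d, ‖Qform d r k u h‖ ^ 2)) ∧
      (-(4 * Real.sqrt (loss d R y ε z v) *
              Real.sqrt (∑ r ∈ R, ∑ k : ZMod d, ‖Qform d r k u h‖ ^ 2))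
          - 2 * (Real.sqrt ((R.sup' hR fun r =>
                  Finset.univ.sup' ⟨0, Finset.mem_univ 0⟩ fun k => y r k + ε))
                / Real.sqrt ε - 1) *
              (∑ r ∈ R, ∑ k : ZMod d,
                ‖Qform d r k u v + Qform d r k z h‖ ^ 2)
        ≤ iteratedFDeriv ℝ 2
            (fun zv : (ZMod d → ℂ) × (ZMod d → ℂ) => loss d R y ε zv.1 zv.2)
            (z, v) ![(u, h), (u, h)]) :=
  hessian_quadratic_form_bound_general d R hR y ε hε

end Ptycho
end
end

section
/- Descent lemma for the regularized loss J: let ε, α_T, β_T ≥ 0. For all z, v, u, h ∈ ℂ^d, J(z+u, v+h) ≤ J(z, v) + 2·Re(u* ∇_z J(z,v)) + 2·Re(h* ∇_v J(z,v)) + ‖u‖₂²·[α_T + d·((10/3)‖v‖₂² + (5/4)‖h‖₂² + (2/3)‖z‖₂² + (1/4)‖u‖₂² + ‖y/d‖₁^{1/2})] + ‖h‖₂²·[β_T + d·((10/3)‖z‖₂² + (5/4)‖u‖₂² + (2/3)‖v‖₂² + (1/4)‖h‖₂² + ‖y/d‖₁^{1/2})]. -/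
open scoped BigOperators Classical
open Finset

noncomputable section

namespace Ptycho

/-! Write `Q(z+u, v+h) = c + w₁ + w₂` with `c = Q(z,v)`, the part `w₁ = Q(u,v) + Q(z,h)` linear
in the increment and the part `w₂ = Q(u,h)` quadratic in it. Since `x ↦ √(x² + ε)` is
1-Lipschitz, each amplitude term exceeds its first-order expansion around `c` by at most
`|w₁ + w₂|² + 2|w₂|(|c| + √y)`, and the first-order terms add up to the pairings with the
Wirtinger gradients. By Parseval for the DFT, `Σ_k |Q_{r,k}(a,b)|² = d Σ_j |a_j|² |b_{j-r}|²`,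
which summed over all shifts is at most `d‖a‖²‖b‖²`; Cauchy–Schwarz and AM–GM then bound the
remainders by the stated polynomial. The regularizers are exact quadratics. -/

lemma abs_sqrt_sq_add_sub_sqrt_sq_add_le {ε : ℝ} (hε : 0 ≤ ε) (a b : ℝ) :
    |√(a ^ 2 + ε) - √(b ^ 2 + ε)| ≤ |a - b| := by
  have hprod : a * b + ε ≤ √(a ^ 2 + ε) * √(b ^ 2 + ε) := by
    rw [← Real.sqrt_mul (by positivity)]
    exact Real.le_sqrt_of_sq_le (by nlinarith [mul_nonneg hε (sq_nonneg (a - b))])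
  rw [← sq_le_sq]
  nlinarith [Real.sq_sqrt (by positivity : 0 ≤ a ^ 2 + ε),
    Real.sq_sqrt (by positivity : 0 ≤ b ^ 2 + ε)]

lemma amplitude_sq_sub_le {ε y : ℝ} (hε : 0 ≤ ε) (hy : 0 ≤ y) (c w₁ w₂ : ℂ) :
    (√(‖c + (w₁ + w₂)‖ ^ 2 + ε) - √(y + ε)) ^ 2 - (√(‖c‖ ^ 2 + ε) - √(y + ε)) ^ 2
        - 2 * (coef ε y c * (starRingEnd ℂ w₁ * c).re)
      ≤ ‖w₁ + w₂‖ ^ 2 + 2 * ‖w₂‖ * (‖c‖ + √y) := by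
  rw [coef]
  set w := w₁ + w₂
  set A := √(‖c‖ ^ 2 + ε)
  set B := √(‖c + w‖ ^ 2 + ε)
  set s := √(y + ε)
  set r₁ := (starRingEnd ℂ w₁ * c).re
  set r₂ := (starRingEnd ℂ w₂ * c).re
  have hBA : |B - A| ≤ ‖w‖ := (abs_sqrt_sq_add_sub_sqrt_sq_add_le hε _ _).trans
    (by simpa using abs_norm_sub_norm_le (c + w) c)
  have hAs : |A - s| ≤ ‖c‖ + √y := by
    have h := abs_sqrt_sq_add_sub_sqrt_sq_add_le hε ‖c‖ √y
    rw [Real.sq_sqrt hy] at h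
    exact h.trans (abs_le.2 ⟨by linarith [norm_nonneg c], by linarith [Real.sqrt_nonneg y]⟩)
  have hcA : ‖c‖ ≤ A := Real.le_sqrt_of_sq_le (by linarith)
  have hr₂ : |r₂| ≤ ‖w₂‖ * ‖c‖ := by
    have h := Complex.abs_re_le_norm (starRingEnd ℂ w₂ * c)
    rwa [norm_mul, Complex.norm_conj] at h
  have hB2 : B ^ 2 - A ^ 2 = 2 * (r₁ + r₂) + ‖w‖ ^ 2 := by
    rw [Real.sq_sqrt (by positivity), Real.sq_sqrt (by positivity)]
    simp only [Complex.sq_norm, Complex.normSq_add, r₁, r₂, w, map_add, add_mul, Complex.add_re,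
      mul_comm c]
    ring
  rcases (Real.sqrt_nonneg _).eq_or_lt with hA | hA
  · have hc : c = 0 := norm_le_zero_iff.1 (hA ▸ hcA)
    simp only [r₁, hc, mul_zero, Complex.zero_re, norm_zero] at hBA ⊢
    nlinarith [abs_le.1 hBA, Real.sqrt_nonneg (‖c + w‖ ^ 2 + ε), Real.sqrt_nonneg (y + ε),
      Real.sqrt_nonneg y, norm_nonneg w₂]
  · have hsA : s / A * A = s := div_mul_cancel₀ s hA.ne'
    have key : A * ((B - s) ^ 2 - (A - s) ^ 2 - 2 * ((1 - s / A) * r₁) - ‖w‖ ^ 2)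
        = 2 * r₂ * (A - s) + s * ((B - A) ^ 2 - ‖w‖ ^ 2) := by
      linear_combination (2 * r₁) * hsA + (A - s) * hB2
    have hlin : 2 * r₂ * (A - s) ≤ A * (2 * ‖w₂‖ * (‖c‖ + √y)) :=
      calc 2 * r₂ * (A - s) ≤ 2 * (|r₂| * |A - s|) := by
            rw [mul_assoc, ← abs_mul]; gcongr; exact le_abs_self _
        _ ≤ 2 * (‖w₂‖ * ‖c‖ * (‖c‖ + √y)) := by gcongr
        _ ≤ A * (2 * ‖w₂‖ * (‖c‖ + √y)) := by
            nlinarith [mul_le_mul_of_nonneg_left hcA (by positivity : 0 ≤ ‖w₂‖ * (‖c‖ + √y))]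
    have hquad : s * ((B - A) ^ 2 - ‖w‖ ^ 2) ≤ 0 :=
      mul_nonpos_of_nonneg_of_nonpos (Real.sqrt_nonneg _)
        (by nlinarith [sq_abs (B - A), abs_nonneg (B - A)])
    nlinarith

lemma sum_sum_mul_sq_le {ι κ : Type*} (s : Finset ι) (t : Finset κ) (f g : ι → κ → ℝ) :
    (∑ i ∈ s, ∑ j ∈ t, f i j * g i j) ^ 2
      ≤ (∑ i ∈ s, ∑ j ∈ t, f i j ^ 2) * ∑ i ∈ s, ∑ j ∈ t, g i j ^ 2 := by
  simpa only [Finset.sum_product] using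
    Finset.sum_mul_sq_le_sq_mul_sq (s ×ˢ t) (fun p => f p.1 p.2) fun p => g p.1 p.2

lemma le_add_div_two_of_sq_le_mul {x p q : ℝ} (hp : 0 ≤ p) (hq : 0 ≤ q) (h : x ^ 2 ≤ p * q) :
    x ≤ (p + q) / 2 := by
  nlinarith [sq_nonneg (p - q), sq_nonneg (x - (p + q) / 2)]

lemma norm_add_add_sq_le (a b c : ℂ) : ‖a + b + c‖ ^ 2 ≤ 3 * (‖a‖ ^ 2 + ‖b‖ ^ 2 + ‖c‖ ^ 2) := by
  nlinarith [norm_add₃_le (a := a) (b := b) (c := c), norm_nonneg (a + b + c),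
    sq_nonneg (‖a‖ - ‖b‖), sq_nonneg (‖b‖ - ‖c‖), sq_nonneg (‖a‖ - ‖c‖)]

section

variable (d : ℕ) [NeZero d] (R : Finset (ZMod d))

lemma Fent_eq_stdAddChar (k j : ZMod d) :
    Fent d k j = ZMod.stdAddChar (-(k * j)) := by
  have hcast : -(k * j) = ((-(k.val * j.val : ℤ) : ℤ) : ZMod d) := by
    push_cast; simp
  rw [hcast, ZMod.stdAddChar_coe, Fent]
  congr 1
  push_cast
  ring

lemma sum_Fent_mul_conj_Fent (j j' : ZMod d) :
    ∑ k : ZMod d, Fent d k j * starRingEnd ℂ (Fent d k j') = if j = j' then (d : ℂ) else 0 := by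
  simp_rw [Fent_eq_stdAddChar, ← AddChar.map_neg_eq_conj, ← AddChar.map_add_eq_mul, neg_neg,
    show ∀ k : ZMod d, -(k * j) + k * j' = k * (j' - j) by intro k; ring]
  rw [AddChar.sum_mulShift _ (ZMod.isPrimitive_stdAddChar d), ZMod.card]
  simp [sub_eq_zero, eq_comm]

lemma sum_norm_sq_sum_mul_Fent (Φ : ZMod d → ℂ) :
    ∑ k : ZMod d, ‖∑ j : ZMod d, Φ j * Fent d k j‖ ^ 2 = d * ∑ j : ZMod d, ‖Φ j‖ ^ 2 := by
  apply Complex.ofReal_injective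
  push_cast
  simp_rw [← Complex.mul_conj', map_sum, map_mul, Finset.sum_mul_sum, Finset.mul_sum]
  rw [Finset.sum_comm]
  refine Finset.sum_congr rfl fun j _ => ?_
  rw [Finset.sum_comm]
  simp_rw [show ∀ k j', Φ j * Fent d k j * (starRingEnd ℂ (Φ j') * starRingEnd ℂ (Fent d k j'))
      = Φ j * starRingEnd ℂ (Φ j') * (Fent d k j * starRingEnd ℂ (Fent d k j')) by
    intros; ring, ← Finset.mul_sum, sum_Fent_mul_conj_Fent]
  simp [mul_comm]

lemma sum_norm_sq_Qform (r : ZMod d) (a b : ZMod d → ℂ) :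
    ∑ k : ZMod d, ‖Qform d r k a b‖ ^ 2 = d * ∑ j : ZMod d, ‖a j‖ ^ 2 * ‖b (j - r)‖ ^ 2 := by
  simpa only [Qform, mul_right_comm _ (Fent d _ _), norm_mul, mul_pow]
    using sum_norm_sq_sum_mul_Fent d fun j => a j * b (j - r)

lemma nsq_nonneg (u : ZMod d → ℂ) : 0 ≤ nsq d u :=
  Finset.sum_nonneg fun _ _ => by positivity

lemma sum_sum_norm_sq_Qform_le (a b : ZMod d → ℂ) :
    ∑ r ∈ R, ∑ k : ZMod d, ‖Qform d r k a b‖ ^ 2 ≤ d * (nsq d a * nsq d b) := by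
  have hshift : ∀ j : ZMod d, ∑ r : ZMod d, ‖b (j - r)‖ ^ 2 = nsq d b := fun j =>
    (Equiv.subLeft j).sum_comp fun x => ‖b x‖ ^ 2
  calc ∑ r ∈ R, ∑ k : ZMod d, ‖Qform d r k a b‖ ^ 2
      ≤ ∑ r : ZMod d, ∑ k : ZMod d, ‖Qform d r k a b‖ ^ 2 :=
        Finset.sum_le_sum_of_subset_of_nonneg (Finset.subset_univ R) fun _ _ _ => by positivity
    _ = d * (nsq d a * nsq d b) := by
        simp_rw [sum_norm_sq_Qform, ← Finset.mul_sum]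
        rw [Finset.sum_comm, nsq, Finset.sum_mul]
        simp_rw [← Finset.mul_sum, hshift]

lemma Qform_add_add (r k : ZMod d) (z v u h : ZMod d → ℂ) :
    Qform d r k (fun j => z j + u j) (fun j => v j + h j)
      = Qform d r k z v + (Qform d r k u v + Qform d r k z h + Qform d r k u h) := by
  simp only [Qform, ← Finset.sum_add_distrib]
  exact Finset.sum_congr rfl fun _ _ => by ring

lemma nsq_add (z u : ZMod d → ℂ) :
    nsq d (fun j => z j + u j) = nsq d z + nsq d u + 2 * reInner d u z := by
  simp only [nsq, reInner, Complex.re_sum, Finset.mul_sum, ← Finset.sum_add_distrib,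
    Complex.sq_norm, Complex.normSq_add, mul_comm (starRingEnd ℂ _)]

lemma reInner_sum_add_ofReal_mul {ι : Type*} (s : Finset ι)
    (g : ι → ZMod d → ℂ) (a : ℝ) (u w : ZMod d → ℂ) :
    reInner d u (fun j => (∑ i ∈ s, g i j) + (a : ℂ) * w j)
      = ∑ i ∈ s, reInner d u (g i) + a * reInner d u w := by
  simp only [reInner, mul_add, Finset.mul_sum, Finset.sum_add_distrib, Complex.add_re,
    Complex.re_sum, mul_left_comm _ (a : ℂ), Complex.re_ofReal_mul]
  rw [Finset.sum_comm]

lemma reInner_gradZr (y : ZMod d → ZMod d → ℝ) (ε : ℝ) (r : ZMod d)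
    (z v u : ZMod d → ℂ) :
    reInner d u (gradZr d y ε r z v) = ∑ k : ZMod d, coef ε (y r k) (Qform d r k z v) *
      (starRingEnd ℂ (Qform d r k u v) * Qform d r k z v).re := by
  have hconj : ∀ k, ∑ j : ZMod d, starRingEnd ℂ (u j) * starRingEnd ℂ (Fent d k j * v (j - r))
      = starRingEnd ℂ (Qform d r k u v) := fun k => by simp [Qform, mul_assoc]
  simp only [reInner, gradZr, Finset.mul_sum, Complex.re_sum]
  rw [Finset.sum_comm]
  refine Finset.sum_congr rfl fun k _ => ?_
  rw [← Complex.re_ofReal_mul, ← hconj, ← Complex.re_sum, Finset.sum_mul, Finset.mul_sum]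
  exact congrArg Complex.re (Finset.sum_congr rfl fun _ _ => by ring)

lemma Qform_eq_sum_add (r k : ZMod d) (z h : ZMod d → ℂ) :
    Qform d r k z h = ∑ j : ZMod d, z (j + r) * Fent d k (j + r) * h j := by
  rw [Qform, ← Equiv.sum_comp (Equiv.addRight r)]
  simp

lemma reInner_gradVr (y : ZMod d → ZMod d → ℝ) (ε : ℝ) (r : ZMod d)
    (z v h : ZMod d → ℂ) :
    reInner d h (gradVr d y ε r z v) = ∑ k : ZMod d, coef ε (y r k) (Qform d r k z v) *
      (starRingEnd ℂ (Qform d r k z h) * Qform d r k z v).re := by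
  have hconj : ∀ k, ∑ j : ZMod d, starRingEnd ℂ (h j) * starRingEnd ℂ (Fent d k (j + r) * z (j + r))
      = starRingEnd ℂ (Qform d r k z h) := fun k => by
    simp [Qform_eq_sum_add d r k z h, mul_comm]
  simp only [reInner, gradVr, Finset.mul_sum, Complex.re_sum]
  rw [Finset.sum_comm]
  refine Finset.sum_congr rfl fun k _ => ?_
  rw [← Complex.re_ofReal_mul, ← hconj, ← Complex.re_sum, Finset.sum_mul, Finset.mul_sum]
  exact congrArg Complex.re (Finset.sum_congr rfl fun _ _ => by ring)

lemma sum_sum_norm_sq_Qform_add_le (z v u h : ZMod d → ℂ) :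
    ∑ r ∈ R, ∑ k : ZMod d, ‖Qform d r k u v + Qform d r k z h + Qform d r k u h‖ ^ 2
      ≤ 3 * d * (nsq d u * nsq d v + nsq d z * nsq d h + nsq d u * nsq d h) := by
  calc ∑ r ∈ R, ∑ k : ZMod d, ‖Qform d r k u v + Qform d r k z h + Qform d r k u h‖ ^ 2
      ≤ ∑ r ∈ R, ∑ k : ZMod d, 3 * (‖Qform d r k u v‖ ^ 2 + ‖Qform d r k z h‖ ^ 2
          + ‖Qform d r k u h‖ ^ 2) :=
        Finset.sum_le_sum fun _ _ => Finset.sum_le_sum fun _ _ => norm_add_add_sq_le _ _ _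
    _ ≤ 3 * (d * (nsq d u * nsq d v) + d * (nsq d z * nsq d h) + d * (nsq d u * nsq d h)) := by
        simp only [← Finset.mul_sum, Finset.sum_add_distrib]
        gcongr <;> exact sum_sum_norm_sq_Qform_le d R _ _
    _ = _ := by ring

lemma sq_sum_sum_norm_Qform_mul_norm_Qform_le (a b a' b' : ZMod d → ℂ) :
    (∑ r ∈ R, ∑ k : ZMod d, ‖Qform d r k a b‖ * ‖Qform d r k a' b'‖) ^ 2
      ≤ (d * (nsq d a * nsq d b)) * (d * (nsq d a' * nsq d b')) :=
  (sum_sum_mul_sq_le _ _ _ _).trans <| mul_le_mul (sum_sum_norm_sq_Qform_le d R a b)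
    (sum_sum_norm_sq_Qform_le d R a' b') (by positivity)
    (mul_nonneg d.cast_nonneg (mul_nonneg (nsq_nonneg d a) (nsq_nonneg d b)))

lemma sq_sum_sum_norm_Qform_mul_sqrt_le (y : ZMod d → ZMod d → ℝ)
    (hy : ∀ r ∈ R, ∀ k : ZMod d, 0 ≤ y r k) (a b : ZMod d → ℂ) :
    (∑ r ∈ R, ∑ k : ZMod d, ‖Qform d r k a b‖ * √(y r k)) ^ 2
      ≤ (d * (nsq d a * nsq d b)) * (d * yd1 d R y) := by
  have hsum : ∑ r ∈ R, ∑ k : ZMod d, √(y r k) ^ 2 = d * yd1 d R y := by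
    rw [yd1, mul_div_cancel₀ _ (NeZero.ne (d : ℝ))]
    exact Finset.sum_congr rfl fun r hr => Finset.sum_congr rfl fun k _ => Real.sq_sqrt (hy r hr k)
  refine (sum_sum_mul_sq_le _ _ _ _).trans ?_
  rw [hsum]
  exact mul_le_mul_of_nonneg_right (sum_sum_norm_sq_Qform_le d R a b)
    (hsum ▸ Finset.sum_nonneg fun _ _ => Finset.sum_nonneg fun _ _ => sq_nonneg _)

lemma loss_add_le_sum {y : ZMod d → ZMod d → ℝ} {ε : ℝ} (hε : 0 ≤ ε)
    (hy : ∀ r ∈ R, ∀ k : ZMod d, 0 ≤ y r k) (z v u h : ZMod d → ℂ) :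
    loss d R y ε (fun j => z j + u j) (fun j => v j + h j)
      ≤ loss d R y ε z v
        + 2 * (∑ r ∈ R, reInner d u (gradZr d y ε r z v)
          + ∑ r ∈ R, reInner d h (gradVr d y ε r z v))
        + ∑ r ∈ R, ∑ k : ZMod d, ‖Qform d r k u v + Qform d r k z h + Qform d r k u h‖ ^ 2
        + 2 * ∑ r ∈ R, ∑ k : ZMod d, ‖Qform d r k u h‖ * ‖Qform d r k z v‖
        + 2 * ∑ r ∈ R, ∑ k : ZMod d, ‖Qform d r k u h‖ * √(y r k) := by
  simp only [loss, lossR, reInner_gradZr, reInner_gradVr, Finset.mul_sum, ← Finset.sum_add_distrib]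
  refine Finset.sum_le_sum fun r hr => Finset.sum_le_sum fun k _ => ?_
  have h := amplitude_sq_sub_le hε (hy r hr k) (Qform d r k z v)
    (Qform d r k u v + Qform d r k z h) (Qform d r k u h)
  rw [Qform_add_add]
  simp only [map_add, add_mul, Complex.add_re] at h
  linarith

lemma loss_add_le {y : ZMod d → ZMod d → ℝ} {ε : ℝ} (hε : 0 ≤ ε)
    (hy : ∀ r ∈ R, ∀ k : ZMod d, 0 ≤ y r k) (z v u h : ZMod d → ℂ) :
    loss d R y ε (fun j => z j + u j) (fun j => v j + h j)
      ≤ loss d R y ε z v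
        + 2 * (∑ r ∈ R, reInner d u (gradZr d y ε r z v)
          + ∑ r ∈ R, reInner d h (gradVr d y ε r z v))
        + d * (nsq d u * ((10 / 3) * nsq d v + (5 / 4) * nsq d h + (2 / 3) * nsq d z
            + (1 / 4) * nsq d u + √(yd1 d R y))
          + nsq d h * ((10 / 3) * nsq d z + (5 / 4) * nsq d u + (2 / 3) * nsq d v
            + (1 / 4) * nsq d h + √(yd1 d R y))) := by
  have hd := d.cast_nonneg (α := ℝ)
  have hu := nsq_nonneg d u
  have hv := nsq_nonneg d v
  have hz := nsq_nonneg d z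
  have hh := nsq_nonneg d h
  have hyd : 0 ≤ yd1 d R y := div_nonneg
    (Finset.sum_nonneg fun r hr => Finset.sum_nonneg fun k _ => hy r hr k) hd
  -- Two AM–GM splittings of the cubic term; `linarith` weighs them 1/3 and 2/3, whence the
  -- constants 10/3 and 2/3.
  have hX := sq_sum_sum_norm_Qform_mul_norm_Qform_le d R u h z v
  have hX₁ := le_add_div_two_of_sq_le_mul (by positivity) (by positivity)
    (hX.trans_eq (by ring : _ = (d * (nsq d u * nsq d v)) * (d * (nsq d z * nsq d h))))
  have hX₂ := le_add_div_two_of_sq_le_mul (by positivity) (by positivity)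
    (hX.trans_eq (by ring : _ = (d * (nsq d u * nsq d z)) * (d * (nsq d v * nsq d h))))
  have hY := le_add_div_two_of_sq_le_mul (by positivity) (by positivity)
    ((sq_sum_sum_norm_Qform_mul_sqrt_le d R y hy u h).trans_eq
      (by linear_combination (-(d ^ 2 * nsq d u * nsq d h : ℝ)) * Real.sq_sqrt hyd :
        _ = (d * √(yd1 d R y) * nsq d u) * (d * √(yd1 d R y) * nsq d h)))
  have hAM : d * (nsq d u * nsq d h) ≤ d * ((nsq d u ^ 2 + nsq d h ^ 2) / 2) :=
    mul_le_mul_of_nonneg_left (by nlinarith [sq_nonneg (nsq d u - nsq d h)]) hd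
  linarith [loss_add_le_sum d R hε hy z v u h, sum_sum_norm_sq_Qform_add_le d R z v u h]

end

theorem descent_lemma_J_general (d : ℕ) [NeZero d] (R : Finset (ZMod d))
    (y : ZMod d → ZMod d → ℝ) (hy : ∀ r ∈ R, ∀ k : ZMod d, 0 ≤ y r k)
    (ε αT βT : ℝ) (hε : 0 ≤ ε)
    (z v u h : ZMod d → ℂ) :
    Jfun d R y ε αT βT (fun j => z j + u j) (fun j => v j + h j)
      ≤ Jfun d R y ε αT βT z v
        + 2 * reInner d u (gradZJ d R y ε αT z v)
        + 2 * reInner d h (gradVJ d R y ε βT z v)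
        + nsq d u * (αT + d * ((10 / 3) * nsq d v + (5 / 4) * nsq d h
            + (2 / 3) * nsq d z + (1 / 4) * nsq d u + Real.sqrt (yd1 d R y)))
        + nsq d h * (βT + d * ((10 / 3) * nsq d z + (5 / 4) * nsq d u
            + (2 / 3) * nsq d v + (1 / 4) * nsq d h + Real.sqrt (yd1 d R y))) := by
  unfold gradZJ gradVJ
  rw [Jfun, Jfun, nsq_add, nsq_add, reInner_sum_add_ofReal_mul, reInner_sum_add_ofReal_mul]
  linarith [loss_add_le d R hε hy z v u h]

/-- **Descent lemma for the regularized loss `J`** (Lemma 2.2 of the paper). -/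
theorem descent_lemma_J (d : ℕ) [NeZero d] (R : Finset (ZMod d)) (hR : R.Nonempty)
    (y : ZMod d → ZMod d → ℝ) (hy : ∀ r ∈ R, ∀ k : ZMod d, 0 ≤ y r k)
    (ε αT βT : ℝ) (hε : 0 ≤ ε) (hαT : 0 ≤ αT) (hβT : 0 ≤ βT)
    (z v u h : ZMod d → ℂ) :
    Jfun d R y ε αT βT (fun j => z j + u j) (fun j => v j + h j)
      ≤ Jfun d R y ε αT βT z v
        + 2 * reInner d u (gradZJ d R y ε αT z v)
        + 2 * reInner d h (gradVJ d R y ε βT z v)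
        + nsq d u * (αT + d * ((10 / 3) * nsq d v + (5 / 4) * nsq d h
            + (2 / 3) * nsq d z + (1 / 4) * nsq d u + Real.sqrt (yd1 d R y)))
        + nsq d h * (βT + d * ((10 / 3) * nsq d z + (5 / 4) * nsq d u
            + (2 / 3) * nsq d v + (1 / 4) * nsq d h + Real.sqrt (yd1 d R y))) :=
  descent_lemma_J_general d R y hy ε αT βT hε z v u h

end Ptycho
end
end

section
/- Gradient bound for the single-shift loss: let ε ≥ 0. For every r ∈ R and all z, v ∈ ℂ^d, ‖∇_z L_{r,ε}(z, v)‖₂ ≤ √d · (L_{r,ε}(z,v))^{1/2} · ‖v‖₂ and ‖∇_v L_{r,ε}(z, v)‖₂ ≤ √d · (L_{r,ε}(z,v))^{1/2} · ‖z‖₂. -/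
open scoped BigOperators Classical
open Finset

noncomputable section

namespace Ptycho

/-! Every entry of either gradient is a sum over `k` of `coef_k · Q_k` times a unimodular Fourier
entry times one entry `w_{σ j}` of `w = v` (resp. `w = z`), `σ` a shift, and
`|coef_k| · |Q_k| ≤ |residual_k|`. Hence `‖∇L‖₂ ≤ (Σ_k |residual_k|) · ‖w‖₂`, and Cauchy–Schwarz
gives `(Σ_k |residual_k|)² ≤ d · L_{r,ε}`. -/

lemma norm_Fent (d : ℕ) (k j : ZMod d) : ‖Fent d k j‖ = 1 := by
  have h : -(2 * (Real.pi : ℂ) * Complex.I * (k.val : ℂ) * (j.val : ℂ)) / (d : ℂ)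
      = ((-(2 * Real.pi * k.val * j.val) / d : ℝ) : ℂ) * Complex.I := by
    push_cast; ring
  rw [Fent, h, Complex.norm_exp_ofReal_mul_I]

lemma abs_coef_mul_norm_le {ε : ℝ} (hε : 0 ≤ ε) (a : ℝ) (c : ℂ) :
    |coef ε a c| * ‖c‖ ≤ |Real.sqrt (‖c‖ ^ 2 + ε) - Real.sqrt (a + ε)| := by
  set s := Real.sqrt (‖c‖ ^ 2 + ε)
  have hcs : ‖c‖ ≤ s := Real.le_sqrt_of_sq_le (by linarith)
  rcases eq_or_ne s 0 with hs | hs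
  · have hc : ‖c‖ = 0 := le_antisymm (hs ▸ hcs) (norm_nonneg c)
    simp [hc]
  · have hcoef : coef ε a c * s = s - Real.sqrt (a + ε) := by
      show (1 - Real.sqrt (a + ε) / s) * s = _
      rw [sub_mul, one_mul, div_mul_cancel₀ _ hs]
    calc |coef ε a c| * ‖c‖ ≤ |coef ε a c| * s := by gcongr
      _ = |s - Real.sqrt (a + ε)| := by rw [← hcoef, abs_mul, abs_of_nonneg (Real.sqrt_nonneg _)]

variable {d : ℕ} [NeZero d]

lemma nsq_le_of_norm_le_mul_comp {g w : ZMod d → ℂ} {C : ℝ} (σ : ZMod d ≃ ZMod d)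
    (h : ∀ j, ‖g j‖ ≤ C * ‖w (σ j)‖) : nsq d g ≤ C ^ 2 * nsq d w :=
  calc nsq d g ≤ ∑ j, C ^ 2 * ‖w (σ j)‖ ^ 2 := by
        refine Finset.sum_le_sum fun j _ => ?_
        rw [← mul_pow]
        exact pow_le_pow_left₀ (norm_nonneg _) (h j) 2
    _ = C ^ 2 * nsq d w := by rw [← Finset.mul_sum, nsq, σ.sum_comp (fun j => ‖w j‖ ^ 2)]

section Gradient

variable (y : ZMod d → ZMod d → ℝ) (ε : ℝ) (r : ZMod d) (z v : ZMod d → ℂ)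

def residual (k : ZMod d) : ℝ :=
  Real.sqrt (‖Qform d r k z v‖ ^ 2 + ε) - Real.sqrt (y r k + ε)

lemma sq_sum_abs_residual_le :
    (∑ k, |residual y ε r z v k|) ^ 2 ≤ d * lossR d y ε r z v :=
  calc (∑ k, |residual y ε r z v k|) ^ 2
      ≤ (Finset.univ : Finset (ZMod d)).card * ∑ k, |residual y ε r z v k| ^ 2 :=
        sq_sum_le_card_mul_sum_sq
    _ = d * lossR d y ε r z v := by simp only [card_univ, ZMod.card, sq_abs, lossR, residual]

variable {ε}

lemma norm_sum_coef_mul_conj_le (hε : 0 ≤ ε) (i : ZMod d) (a : ℂ) :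
    ‖∑ k, (coef ε (y r k) (Qform d r k z v) : ℂ) * Qform d r k z v *
        (starRingEnd ℂ) (Fent d k i * a)‖ ≤ (∑ k, |residual y ε r z v k|) * ‖a‖ := by
  rw [Finset.sum_mul]
  refine (norm_sum_le _ _).trans (Finset.sum_le_sum fun k _ => ?_)
  rw [norm_mul, norm_mul, Complex.norm_conj, norm_mul, norm_Fent, one_mul, Complex.norm_real,
    Real.norm_eq_abs]
  exact mul_le_mul_of_nonneg_right (abs_coef_mul_norm_le hε _ _) (norm_nonneg a)

lemma sqrt_nsq_gradient_le (hε : 0 ≤ ε) {g w : ZMod d → ℂ} (σ : ZMod d ≃ ZMod d)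
    (τ : ZMod d → ZMod d)
    (hg : ∀ j, g j = ∑ k, (coef ε (y r k) (Qform d r k z v) : ℂ) * Qform d r k z v *
        (starRingEnd ℂ) (Fent d k (τ j) * w (σ j))) :
    Real.sqrt (nsq d g)
      ≤ Real.sqrt d * Real.sqrt (lossR d y ε r z v) * Real.sqrt (nsq d w) := by
  have hg_le : nsq d g ≤ d * lossR d y ε r z v * nsq d w :=
    calc nsq d g ≤ (∑ k, |residual y ε r z v k|) ^ 2 * nsq d w :=
          nsq_le_of_norm_le_mul_comp σ fun j =>
            hg j ▸ norm_sum_coef_mul_conj_le y r z v hε (τ j) (w (σ j))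
      _ ≤ d * lossR d y ε r z v * nsq d w := by
          gcongr
          · exact Finset.sum_nonneg fun j _ => by positivity
          · exact sq_sum_abs_residual_le y ε r z v
  have hloss : 0 ≤ lossR d y ε r z v := Finset.sum_nonneg fun _ _ => sq_nonneg _
  rw [← Real.sqrt_mul (Nat.cast_nonneg d), ← Real.sqrt_mul (by positivity)]
  exact Real.sqrt_le_sqrt hg_le

end Gradient

theorem single_shift_gradient_bound_general (d : ℕ) [NeZero d]
    (R : Finset (ZMod d))
    (y : ZMod d → ZMod d → ℝ)
    (ε : ℝ) (hε : 0 ≤ ε) :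
    ∀ r ∈ R, ∀ z v : ZMod d → ℂ,
      Real.sqrt (nsq d (gradZr d y ε r z v))
        ≤ Real.sqrt d * Real.sqrt (lossR d y ε r z v) * Real.sqrt (nsq d v) ∧
      Real.sqrt (nsq d (gradVr d y ε r z v))
        ≤ Real.sqrt d * Real.sqrt (lossR d y ε r z v) * Real.sqrt (nsq d z) := by
  intro r _ z v
  exact ⟨sqrt_nsq_gradient_le y r z v hε (Equiv.subRight r) id fun _ => rfl,
    sqrt_nsq_gradient_le y r z v hε (Equiv.addRight r) (· + r) fun _ => rfl⟩

/-- **Gradient bound for the single-shift loss:** for every `ε ≥ 0` and `r ∈ R`,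
`‖∇_z L_{r,ε}(z,v)‖₂ ≤ √d·√(L_{r,ε}(z,v))·‖v‖₂` and
`‖∇_v L_{r,ε}(z,v)‖₂ ≤ √d·√(L_{r,ε}(z,v))·‖z‖₂`. -/
theorem single_shift_gradient_bound (d : ℕ) [NeZero d]
    (R : Finset (ZMod d)) (hR : R.Nonempty)
    (y : ZMod d → ZMod d → ℝ) (hy : ∀ r ∈ R, ∀ k : ZMod d, 0 ≤ y r k)
    (ε : ℝ) (hε : 0 ≤ ε) :
    ∀ r ∈ R, ∀ z v : ZMod d → ℂ,
      Real.sqrt (nsq d (gradZr d y ε r z v))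
        ≤ Real.sqrt d * Real.sqrt (lossR d y ε r z v) * Real.sqrt (nsq d v) ∧
      Real.sqrt (nsq d (gradVr d y ε r z v))
        ≤ Real.sqrt d * Real.sqrt (lossR d y ε r z v) * Real.sqrt (nsq d z) :=
  single_shift_gradient_bound_general d R y ε hε

end Ptycho
end
end

section
/- Gradient bound for the single-shift regularized loss: let ε, α_T, β_T ≥ 0 and let p = (p_r)_{r∈R} be a probability vector with p_r > 0. For every r ∈ R and all z, v ∈ ℂ^d, ‖∇_z J_r(z, v)‖₂ ≤ √d · (L_{r,ε}(z,v))^{1/2} · ‖v‖₂ + α_T · p_r · ‖z‖₂, and ‖∇_v J_r(z, v)‖₂ ≤ √d · (L_{r,ε}(z,v))^{1/2} · ‖z‖₂ + β_T · p_r · ‖v‖₂. -/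
open scoped BigOperators Classical
open Finset

noncomputable section

namespace Ptycho

/-- Single-shift regularized loss `J_r(z,v) = L_{r,ε}(z,v) + α_T p_r‖z‖₂² + β_T p_r‖v‖₂²`. -/
def JrFun (d : ℕ) [NeZero d] (y : ZMod d → ZMod d → ℝ) (ε αT βT pr : ℝ) (r : ZMod d)
    (z v : ZMod d → ℂ) : ℝ :=
  lossR d y ε r z v + αT * pr * nsq d z + βT * pr * nsq d v

/-- Wirtinger gradient `∇_z J_r(z,v) = ∇_z L_{r,ε}(z,v) + α_T p_r z`. -/
def gradZJr (d : ℕ) [NeZero d] (y : ZMod d → ZMod d → ℝ) (ε αT pr : ℝ) (r : ZMod d)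
    (z v : ZMod d → ℂ) : ZMod d → ℂ := fun j =>
  gradZr d y ε r z v j + ((αT * pr : ℝ) : ℂ) * z j

/-- Wirtinger gradient `∇_v J_r(z,v) = ∇_v L_{r,ε}(z,v) + β_T p_r v`. -/
def gradVJr (d : ℕ) [NeZero d] (y : ZMod d → ZMod d → ℝ) (ε βT pr : ℝ) (r : ZMod d)
    (z v : ZMod d → ℂ) : ZMod d → ℂ := fun j =>
  gradVr d y ε r z v j + ((βT * pr : ℝ) : ℂ) * v j

/-- Stochastic gradient `g_z(z,v) = (1/K)·Σ_{k} p_{r^k}^{−1}·∇_z J_{r^k}(z,v)` for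
sampled indices `idx : Fin K → ZMod d`. -/
def sgZ (d : ℕ) [NeZero d] (y : ZMod d → ZMod d → ℝ) (ε αT : ℝ) (p : ZMod d → ℝ)
    (K : ℕ) (idx : Fin K → ZMod d) (z v : ZMod d → ℂ) : ZMod d → ℂ := fun j =>
  ((1 / K : ℝ) : ℂ) * ∑ k : Fin K,
    (((p (idx k))⁻¹ : ℝ) : ℂ) * gradZJr d y ε αT (p (idx k)) (idx k) z v j

/-- Stochastic gradient `g_v(z,v) = (1/K)·Σ_{k} p_{r^k}^{−1}·∇_v J_{r^k}(z,v)`. -/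
def sgV (d : ℕ) [NeZero d] (y : ZMod d → ZMod d → ℝ) (ε βT : ℝ) (p : ZMod d → ℝ)
    (K : ℕ) (idx : Fin K → ZMod d) (z v : ZMod d → ℂ) : ZMod d → ℂ := fun j =>
  ((1 / K : ℝ) : ℂ) * ∑ k : Fin K,
    (((p (idx k))⁻¹ : ℝ) : ℂ) * gradVJr d y ε βT (p (idx k)) (idx k) z v j

/-- `min_{r∈R} p_r`. -/
def pmin {d : ℕ} (R : Finset (ZMod d)) (hR : R.Nonempty) (p : ZMod d → ℝ) : ℝ :=
  R.inf' hR p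

/-- `B_z(z,v) = ((15/4)d)^{1/2}·[(d‖v‖₂/(√K·min_r p_r))·(‖z‖₂‖v‖₂ + ‖y/d‖₁^{1/2}) + α_T‖z‖₂]`. -/
def BzFun (d : ℕ) [NeZero d] (R : Finset (ZMod d)) (hR : R.Nonempty)
    (y : ZMod d → ZMod d → ℝ) (αT : ℝ) (p : ZMod d → ℝ) (K : ℕ)
    (z v : ZMod d → ℂ) : ℝ :=
  Real.sqrt ((15 / 4) * d) *
    ((d * Real.sqrt (nsq d v) / (Real.sqrt K * pmin R hR p)) *
        (Real.sqrt (nsq d z) * Real.sqrt (nsq d v) + Real.sqrt (yd1 d R y))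
      + αT * Real.sqrt (nsq d z))

/-- `B_v(z,v) = ((15/4)d)^{1/2}·[(d‖z‖₂/(√K·min_r p_r))·(‖z‖₂‖v‖₂ + ‖y/d‖₁^{1/2}) + β_T‖v‖₂]`. -/
def BvFun (d : ℕ) [NeZero d] (R : Finset (ZMod d)) (hR : R.Nonempty)
    (y : ZMod d → ZMod d → ℝ) (βT : ℝ) (p : ZMod d → ℝ) (K : ℕ)
    (z v : ZMod d → ℂ) : ℝ :=
  Real.sqrt ((15 / 4) * d) *
    ((d * Real.sqrt (nsq d z) / (Real.sqrt K * pmin R hR p)) *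
        (Real.sqrt (nsq d z) * Real.sqrt (nsq d v) + Real.sqrt (yd1 d R y))
      + βT * Real.sqrt (nsq d v))

/-! Both gradients have the form `∑ₖ aₖ uₖ` with `aₖ = coef · z^T Q_{r,k} v`. Every `uₖ` has the
norm of `v` (resp. `z`), being a shifted copy multiplied by unimodular Fourier entries, and
`|aₖ| ≤ |√(|z^T Q_{r,k} v|² + ε) − √(y_{r,k} + ε)|` because `|c| ≤ √(|c|² + ε)`. The triangle
inequality and Cauchy–Schwarz over the `d` indices `k` then give `√d · √L_{r,ε}` times that norm;
the regularization term adds `α_T p_r ‖z‖₂` (resp. `β_T p_r ‖v‖₂`) by the triangle inequality. -/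

end Ptycho

theorem norm_sum_smul_le_sqrt_card_mul {ι 𝕜 E : Type*} [Fintype ι] [NormedField 𝕜]
    [SeminormedAddCommGroup E] [NormedSpace 𝕜 E] (a : ι → 𝕜) (u : ι → E) {C : ℝ}
    (hC : 0 ≤ C) (hu : ∀ i, ‖u i‖ ≤ C) :
    ‖∑ i, a i • u i‖ ≤ √(Fintype.card ι) * √(∑ i, ‖a i‖ ^ 2) * C := by
  have cauchy_schwarz : ∑ i, ‖a i‖ ≤ √(Fintype.card ι) * √(∑ i, ‖a i‖ ^ 2) := by
    rw [← Real.sqrt_mul (Nat.cast_nonneg _)]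
    refine Real.le_sqrt_of_sq_le ?_
    simpa only [Finset.card_univ] using sq_sum_le_card_mul_sum_sq (s := Finset.univ) (f := (‖a ·‖))
  calc ‖∑ i, a i • u i‖ ≤ ∑ i, ‖a i‖ * C := by
        refine (norm_sum_le _ _).trans (Finset.sum_le_sum fun i _ => ?_)
        rw [norm_smul]
        exact mul_le_mul_of_nonneg_left (hu i) (norm_nonneg _)
    _ = (∑ i, ‖a i‖) * C := (Finset.sum_mul _ _ _).symm
    _ ≤ _ := mul_le_mul_of_nonneg_right cauchy_schwarz hC

namespace Ptycho

lemma norm_coef_mul_le {ε : ℝ} (hε : 0 ≤ ε) (t : ℝ) (c : ℂ) :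
    ‖(coef ε t c : ℂ) * c‖ ≤ |√(‖c‖ ^ 2 + ε) - √(t + ε)| := by
  set S := √(‖c‖ ^ 2 + ε)
  have norm_le_S : ‖c‖ ≤ S := Real.le_sqrt_of_sq_le (by linarith)
  rw [norm_mul, Complex.norm_real, Real.norm_eq_abs]
  rcases (Real.sqrt_nonneg (‖c‖ ^ 2 + ε)).eq_or_lt with hS | hS
  · have norm_c : ‖c‖ = 0 := le_antisymm (hS ▸ norm_le_S) (norm_nonneg c)
    rw [norm_c, mul_zero]
    exact abs_nonneg _
  · have coef_eq : coef ε t c = (S - √(t + ε)) / S := by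
      rw [coef, sub_div, div_self hS.ne']
    calc |coef ε t c| * ‖c‖ = |S - √(t + ε)| * (‖c‖ / S) := by
          rw [coef_eq, abs_div, abs_of_pos hS]; ring
      _ ≤ |S - √(t + ε)| * 1 :=
          mul_le_mul_of_nonneg_left ((div_le_one hS).mpr norm_le_S) (abs_nonneg _)
      _ = _ := mul_one _

lemma sum_norm_sq_coef_mul_le_lossR (d : ℕ) [NeZero d] (y : ZMod d → ZMod d → ℝ) {ε : ℝ}
    (hε : 0 ≤ ε) (r : ZMod d) (z v : ZMod d → ℂ) :
    ∑ k : ZMod d, ‖(coef ε (y r k) (Qform d r k z v) : ℂ) * Qform d r k z v‖ ^ 2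
      ≤ lossR d y ε r z v :=
  Finset.sum_le_sum fun _ _ =>
    (pow_le_pow_left₀ (norm_nonneg _) (norm_coef_mul_le hε _ _) 2).trans_eq (sq_abs _)

lemma sqrt_nsq_eq_norm (d : ℕ) [NeZero d] (u : ZMod d → ℂ) :
    √(nsq d u) = ‖WithLp.toLp 2 u‖ := by
  rw [EuclideanSpace.norm_eq, nsq]

lemma nsq_conj_Fent_mul_comp_equiv (d : ℕ) [NeZero d] (k : ZMod d) (g : ZMod d → ZMod d)
    (σ : ZMod d ≃ ZMod d) (u : ZMod d → ℂ) :
    nsq d (fun j => (starRingEnd ℂ) (Fent d k (g j) * u (σ j))) = nsq d u := by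
  simp only [nsq, Complex.norm_conj, norm_mul, norm_Fent, one_mul]
  exact σ.sum_comp (‖u ·‖ ^ 2)

lemma sqrt_nsq_sum_mul_le (d : ℕ) [NeZero d] (a : ZMod d → ℂ) (u : ZMod d → ZMod d → ℂ)
    (w : ZMod d → ℂ) (hu : ∀ k, nsq d (u k) = nsq d w) :
    √(nsq d (fun j => ∑ k, a k * u k j))
      ≤ √d * √(∑ k, ‖a k‖ ^ 2) * √(nsq d w) := by
  have sum_eq : WithLp.toLp 2 (fun j => ∑ k, a k * u k j)
      = ∑ k, a k • WithLp.toLp 2 (u k) := by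
    rw [← WithLp.toLp_sum]
    congr 1
    ext j
    simp [Finset.sum_apply]
  rw [sqrt_nsq_eq_norm, sum_eq]
  simpa only [ZMod.card] using norm_sum_smul_le_sqrt_card_mul a (fun k => WithLp.toLp 2 (u k))
    (Real.sqrt_nonneg _) fun k => by rw [← sqrt_nsq_eq_norm, hu k]

lemma sqrt_nsq_add_real_mul_le (d : ℕ) [NeZero d] (f g : ZMod d → ℂ) {c : ℝ} (hc : 0 ≤ c) :
    √(nsq d (fun j => f j + (c : ℂ) * g j)) ≤ √(nsq d f) + c * √(nsq d g) := by
  have add_eq : WithLp.toLp 2 (fun j => f j + (c : ℂ) * g j)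
      = WithLp.toLp 2 f + (c : ℂ) • WithLp.toLp 2 g := rfl
  rw [sqrt_nsq_eq_norm, add_eq, sqrt_nsq_eq_norm, sqrt_nsq_eq_norm]
  refine (norm_add_le _ _).trans_eq ?_
  rw [norm_smul, Complex.norm_real, Real.norm_of_nonneg hc]

section GradientBounds

variable (d : ℕ) [NeZero d] (y : ZMod d → ZMod d → ℝ) {ε : ℝ} (r : ZMod d) (z v : ZMod d → ℂ)

lemma sqrt_nsq_gradZr_le (hε : 0 ≤ ε) :
    √(nsq d (gradZr d y ε r z v)) ≤ √d * √(lossR d y ε r z v) * √(nsq d v) :=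
  calc _ ≤ √d * √(∑ k, ‖(coef ε (y r k) (Qform d r k z v) : ℂ) * Qform d r k z v‖ ^ 2)
        * √(nsq d v) :=
        sqrt_nsq_sum_mul_le d _ _ v fun k =>
          nsq_conj_Fent_mul_comp_equiv d k id (Equiv.subRight r) v
    _ ≤ _ := by gcongr; exact sum_norm_sq_coef_mul_le_lossR d y hε r z v

lemma sqrt_nsq_gradVr_le (hε : 0 ≤ ε) :
    √(nsq d (gradVr d y ε r z v)) ≤ √d * √(lossR d y ε r z v) * √(nsq d z) :=
  calc _ ≤ √d * √(∑ k, ‖(coef ε (y r k) (Qform d r k z v) : ℂ) * Qform d r k z v‖ ^ 2)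
        * √(nsq d z) :=
        sqrt_nsq_sum_mul_le d _ _ z fun k =>
          nsq_conj_Fent_mul_comp_equiv d k (· + r) (Equiv.addRight r) z
    _ ≤ _ := by gcongr; exact sum_norm_sq_coef_mul_le_lossR d y hε r z v

end GradientBounds

theorem single_shift_regularized_gradient_bound_general (d : ℕ) [NeZero d]
    (R : Finset (ZMod d))
    (y : ZMod d → ZMod d → ℝ)
    (ε αT βT : ℝ) (hε : 0 ≤ ε) (hαT : 0 ≤ αT) (hβT : 0 ≤ βT)
    (p : ZMod d → ℝ) (hp : ∀ r ∈ R, 0 < p r) :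
    ∀ r ∈ R, ∀ z v : ZMod d → ℂ,
      Real.sqrt (nsq d (gradZJr d y ε αT (p r) r z v))
        ≤ Real.sqrt d * Real.sqrt (lossR d y ε r z v) * Real.sqrt (nsq d v)
          + αT * p r * Real.sqrt (nsq d z) ∧
      Real.sqrt (nsq d (gradVJr d y ε βT (p r) r z v))
        ≤ Real.sqrt d * Real.sqrt (lossR d y ε r z v) * Real.sqrt (nsq d z)
          + βT * p r * Real.sqrt (nsq d v) := by
  intro r hr z v
  have hpr : 0 ≤ p r := (hp r hr).le
  exact ⟨(sqrt_nsq_add_real_mul_le d _ z (mul_nonneg hαT hpr)).trans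
      (add_le_add_left (sqrt_nsq_gradZr_le d y r z v hε) _),
    (sqrt_nsq_add_real_mul_le d _ v (mul_nonneg hβT hpr)).trans
      (add_le_add_left (sqrt_nsq_gradVr_le d y r z v hε) _)⟩

/-- **Gradient bound for the single-shift regularized loss:** for every `r ∈ R`,
`‖∇_z J_r(z,v)‖₂ ≤ √d·√(L_{r,ε}(z,v))·‖v‖₂ + α_T p_r ‖z‖₂` and
`‖∇_v J_r(z,v)‖₂ ≤ √d·√(L_{r,ε}(z,v))·‖z‖₂ + β_T p_r ‖v‖₂`. -/
theorem single_shift_regularized_gradient_bound (d : ℕ) [NeZero d]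
    (R : Finset (ZMod d)) (hR : R.Nonempty)
    (y : ZMod d → ZMod d → ℝ) (hy : ∀ r ∈ R, ∀ k : ZMod d, 0 ≤ y r k)
    (ε αT βT : ℝ) (hε : 0 ≤ ε) (hαT : 0 ≤ αT) (hβT : 0 ≤ βT)
    (p : ZMod d → ℝ) (hp : ∀ r ∈ R, 0 < p r) (hpsum : ∑ r ∈ R, p r = 1) :
    ∀ r ∈ R, ∀ z v : ZMod d → ℂ,
      Real.sqrt (nsq d (gradZJr d y ε αT (p r) r z v))
        ≤ Real.sqrt d * Real.sqrt (lossR d y ε r z v) * Real.sqrt (nsq d v)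
          + αT * p r * Real.sqrt (nsq d z) ∧
      Real.sqrt (nsq d (gradVJr d y ε βT (p r) r z v))
        ≤ Real.sqrt d * Real.sqrt (lossR d y ε r z v) * Real.sqrt (nsq d z)
          + βT * p r * Real.sqrt (nsq d v) :=
  single_shift_regularized_gradient_bound_general d R y ε αT βT hε hαT hβT p hp

end Ptycho
end
end
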